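/- The smooth map f : ℝ³ → ℝ², f(x, y, z) = λ(x + y, z) for a fixed nonzero real λ, is a conformal Riemannian morphism with constant Riemannian factor λ², and satisfies ‖df_x‖_F² = 3λ² > λ² · rank(df_x) = 2λ² at every point; in particular a conformal Riemannian morphism need not satisfy ‖df_x‖_F² = Λ_f(x) · rank(df_x). -/

import Mathlib

open scoped RealInnerProductSpace

/-- A linear map is a geometric function with conformality factor `r > 0` if there is a
subspace `C` with `V = ker f ⊕ C` on which `f` scales inner products by `r`. -/
def IsGeometric {V W : Type*} [NormedAddCommGroup V] [InnerProductSpace ℝ V]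
    [NormedAddCommGroup W] [InnerProductSpace ℝ W] (f : V →L[ℝ] W) (r : ℝ) : Prop :=
  0 < r ∧ ∃ C : Submodule ℝ V, IsCompl (LinearMap.ker (f : V →ₗ[ℝ] W)) C ∧
    ∀ u ∈ C, ∀ v ∈ C, ⟪f u, f v⟫ = r * ⟪u, v⟫

/-- The squared Frobenius norm `‖f‖_F² = trace (f* ∘ f)`. -/
noncomputable def frobSq {V W : Type*}
    [NormedAddCommGroup V] [InnerProductSpace ℝ V] [FiniteDimensional ℝ V]
    [NormedAddCommGroup W] [InnerProductSpace ℝ W] [FiniteDimensional ℝ W]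
    (f : V →L[ℝ] W) : ℝ :=
  LinearMap.trace ℝ V ((ContinuousLinearMap.adjoint f).comp f : V →ₗ[ℝ] V)

/-!
The map `s (a, b) = λ⁻¹ (a, 0, b)` is a right inverse of `T` with `⟪s a, s b⟫ = λ⁻² ⟪a, b⟫`, so
its range `span {e₀, e₂}` is a complement of `ker T` on which `T` scales inner products by `λ²`,
and `T` is surjective, of rank 2. Computed on the standard basis, the Frobenius norm is
`‖T e₀‖² + ‖T e₁‖² + ‖T e₂‖² = 3λ²`. The excess over `λ² · rank T` is possible because this
complement is not orthogonal to `ker T = span {e₀ - e₁}`.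
-/

namespace LinearMap

variable {R V W : Type*} [Ring R] [AddCommGroup V] [Module R V] [AddCommGroup W] [Module R W]
  {f : V →ₗ[R] W} {s : W →ₗ[R] V}

theorem range_eq_top_of_comp_eq_id (h : f ∘ₗ s = id) : range f = ⊤ :=
  range_eq_top_of_surjective f fun w => ⟨s w, congr($h w)⟩

theorem isCompl_ker_range_of_comp_eq_id (h : f ∘ₗ s = id) : IsCompl (ker f) (range s) := by
  have hproj : IsIdempotentElem (s ∘ₗ f) := by
    rw [IsIdempotentElem, Module.End.mul_eq_comp, comp_assoc, ← comp_assoc f, h, id_comp]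
  have hrange : range (s ∘ₗ f) = range s :=
    range_comp_of_range_eq_top s (range_eq_top_of_comp_eq_id h)
  have hker : ker (s ∘ₗ f) = ker f := ker_comp_of_ker_eq_bot f (ker_eq_bot_of_inverse h)
  simpa only [hrange, hker] using (IsIdempotentElem.isCompl hproj).symm

end LinearMap

section

variable {V W : Type*} [NormedAddCommGroup V] [InnerProductSpace ℝ V]
  [NormedAddCommGroup W] [InnerProductSpace ℝ W]

theorem isGeometric_of_comp_eq_id {f : V →L[ℝ] W} {s : W →ₗ[ℝ] V} {r : ℝ} (hr : 0 < r)
    (hfs : (f : V →ₗ[ℝ] W) ∘ₗ s = LinearMap.id) (hs : ∀ a b, r * ⟪s a, s b⟫ = ⟪a, b⟫) :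
    IsGeometric f r := by
  refine ⟨hr, LinearMap.range s, LinearMap.isCompl_ker_range_of_comp_eq_id hfs, ?_⟩
  rintro _ ⟨a, rfl⟩ _ ⟨b, rfl⟩
  have hf : ∀ w, f (s w) = w := fun w => congr($hfs w)
  rw [hf, hf, hs]

theorem frobSq_eq_sum_norm_sq [FiniteDimensional ℝ V] [FiniteDimensional ℝ W] {ι : Type*}
    [Fintype ι] (f : V →L[ℝ] W) (b : OrthonormalBasis ι ℝ V) :
    frobSq f = ∑ i, ‖f (b i)‖ ^ 2 := by
  rw [frobSq, LinearMap.trace_eq_sum_inner _ b]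
  congr! 1 with i
  simp [ContinuousLinearMap.adjoint_inner_right]

end

noncomputable def embedSkipMiddle : EuclideanSpace ℝ (Fin 2) →ₗᵢ[ℝ] EuclideanSpace ℝ (Fin 3) where
  toFun w := !₂[w 0, 0, w 1]
  map_add' v w := by ext i; fin_cases i <;> simp
  map_smul' c w := by ext i; fin_cases i <;> simp
  norm_map' w := by simp [EuclideanSpace.norm_eq, Fin.sum_univ_succ]

theorem embedSkipMiddle_apply (w : EuclideanSpace ℝ (Fin 2)) :
    embedSkipMiddle w = !₂[w 0, 0, w 1] :=
  rfl

/-- The smooth (linear) map `f : ℝ³ → ℝ²`, `f (x, y, z) = λ (x + y, z)` with `λ ≠ 0`, has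
differential `T` at every point; `T` is a geometric function (so `f` is a conformal
Riemannian morphism) with constant conformality factor `λ²`, and it satisfies
`‖df_x‖_F² = 3 λ² > λ² · rank (df_x) = 2 λ²`.  In particular a conformal Riemannian
morphism need not satisfy `‖df_x‖_F² = Λ_f(x) · rank (df_x)`. -/
theorem example_crm_strict_frobenius_inequality (lam : ℝ) (hlam : lam ≠ 0)
    (T : EuclideanSpace ℝ (Fin 3) →L[ℝ] EuclideanSpace ℝ (Fin 2))
    (hT : ∀ v : EuclideanSpace ℝ (Fin 3), T v = ![lam * (v 0 + v 1), lam * v 2]) :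
    (∀ x : EuclideanSpace ℝ (Fin 3), fderiv ℝ (⇑T) x = T) ∧
    IsGeometric T (lam ^ 2) ∧
    frobSq T = 3 * lam ^ 2 ∧
    Module.finrank ℝ (LinearMap.range (T : EuclideanSpace ℝ (Fin 3) →ₗ[ℝ] EuclideanSpace ℝ (Fin 2))) = 2 ∧
    lam ^ 2 * (Module.finrank ℝ (LinearMap.range (T : EuclideanSpace ℝ (Fin 3) →ₗ[ℝ] EuclideanSpace ℝ (Fin 2))) : ℝ) < frobSq T := by
  set s := lam⁻¹ • embedSkipMiddle.toLinearMap
  have hsection : (T : EuclideanSpace ℝ (Fin 3) →ₗ[ℝ] EuclideanSpace ℝ (Fin 2)) ∘ₗ s =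
      LinearMap.id := by
    ext w i
    fin_cases i <;> simp [s, embedSkipMiddle_apply, hT, hlam]
  have hscale : ∀ a b, lam ^ 2 * ⟪s a, s b⟫ = ⟪a, b⟫ := by
    intro a b
    simp only [s, LinearMap.smul_apply, inner_smul_left, inner_smul_right,
      LinearIsometry.coe_toLinearMap, LinearIsometry.inner_map_map, conj_trivial]
    field_simp
  have hfrob : frobSq T = 3 * lam ^ 2 := by
    rw [frobSq_eq_sum_norm_sq T (EuclideanSpace.basisFun (Fin 3) ℝ)]
    simp [Fin.sum_univ_succ, EuclideanSpace.norm_sq_eq, hT]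
    ring
  have hrank : Module.finrank ℝ (LinearMap.range
      (T : EuclideanSpace ℝ (Fin 3) →ₗ[ℝ] EuclideanSpace ℝ (Fin 2))) = 2 := by
    rw [LinearMap.range_eq_top_of_comp_eq_id hsection, finrank_top, finrank_euclideanSpace_fin]
  refine ⟨fun _ => T.fderiv, isGeometric_of_comp_eq_id (by positivity) hsection hscale, hfrob,
    hrank, ?_⟩
  rw [hfrob, hrank]
  have hlam_sq : 0 < lam ^ 2 := by positivity
  push_cast
  linarith
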